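/- For every n ≥ 0, as r → 0⁺ one has Φ_n′(r) + 1/r − ln(1/r) [ I₀(γr) ṽ_n(r) − I₁(γr) w̃_n(r) ] = O(r), i.e. there exist δ > 0 and a constant c₀ ≥ 0 such that the absolute value of the left-hand side is at most c₀ r for all 0 < r < δ; here ṽ_n(r) = 2 Σ_{k=1}^{⌊n/2⌋} k a_{n,2k} r^{2k−1} − γ w_n(r) and w̃_n(r) = 2 Σ_{k=1}^{⌊(n−1)/2⌋} k a_{n,2k+1} r^{2k} − γ v_n(r). -/

import Mathlib

open Real Filter

/-- `I₀(z) = Σ_{n=0}^∞ (z/2)^{2n}/(n!)²`. -/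
noncomputable def besselI0 (z : ℝ) : ℝ :=
  ∑' n : ℕ, (z / 2) ^ (2 * n) / (Nat.factorial n : ℝ) ^ 2

/-- `I₁(z) = Σ_{n=0}^∞ (z/2)^{2n+1}/(n!(n+1)!)`. -/
noncomputable def besselI1 (z : ℝ) : ℝ :=
  ∑' n : ℕ, (z / 2) ^ (2 * n + 1) / ((Nat.factorial n : ℝ) * (Nat.factorial (n + 1) : ℝ))

/-- `ψ(0) = 0`, `ψ(n) = Σ_{m=1}^n 1/m`. -/
noncomputable def psiHarm (n : ℕ) : ℝ := ∑ m ∈ Finset.Icc 1 n, (1 / m : ℝ)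

/-- `K₀(z) = −(ln(z/2) + C) I₀(z) + Σ_{n=1}^∞ (ψ(n)/(n!)²) (z/2)^{2n}`. -/
noncomputable def besselK0 (z : ℝ) : ℝ :=
  -(Real.log (z / 2) + Real.eulerMascheroniConstant) * besselI0 z +
    ∑' n : ℕ, psiHarm (n + 1) / (Nat.factorial (n + 1) : ℝ) ^ 2 * (z / 2) ^ (2 * (n + 1))

/-- `K₁(z) = 1/z + (ln(z/2) + C) I₁(z) − (1/2) Σ_{n=0}^∞ ((ψ(n+1)+ψ(n))/(n!(n+1)!)) (z/2)^{2n+1}`. -/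
noncomputable def besselK1 (z : ℝ) : ℝ :=
  1 / z + (Real.log (z / 2) + Real.eulerMascheroniConstant) * besselI1 z -
    (1 / 2) * ∑' n : ℕ, (psiHarm (n + 1) + psiHarm n) /
      ((Nat.factorial n : ℝ) * (Nat.factorial (n + 1) : ℝ)) * (z / 2) ^ (2 * n + 1)

/-- `β_n = κ²(n+1)/c²`. -/
noncomputable def betaC (κ c : ℝ) (n : ℕ) : ℝ := κ ^ 2 * (n + 1) / c ^ 2

/-- `γ = κ/c`. -/
noncomputable def gammaC (κ c : ℝ) : ℝ := κ / c

/-- `v_n(r) = Σ_{k=0}^{⌊n/2⌋} a_{n,2k} r^{2k}`. -/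
noncomputable def vPoly (a : ℕ → ℕ → ℝ) (n : ℕ) (r : ℝ) : ℝ :=
  ∑ k ∈ Finset.range (n / 2 + 1), a n (2 * k) * r ^ (2 * k)

/-- `w_n(r) = Σ_{k=0}^{⌊(n−1)/2⌋} a_{n,2k+1} r^{2k+1}` (so `w₀ = 0` since `a_{0,1} = 0`). -/
noncomputable def wPoly (a : ℕ → ℕ → ℝ) (n : ℕ) (r : ℝ) : ℝ :=
  ∑ k ∈ Finset.range ((n - 1) / 2 + 1), a n (2 * k + 1) * r ^ (2 * k + 1)

/-- `Φ_n(r) = K₀(γr) v_n(r) + K₁(γr) w_n(r)`. -/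
noncomputable def PhiFund (γ : ℝ) (a : ℕ → ℕ → ℝ) (n : ℕ) (r : ℝ) : ℝ :=
  besselK0 (γ * r) * vPoly a n r + besselK1 (γ * r) * wPoly a n r

/-- `ṽ_n(r) = 2 Σ_{k=1}^{⌊n/2⌋} k a_{n,2k} r^{2k−1} − γ w_n(r)`. -/
noncomputable def vTilde (γ : ℝ) (a : ℕ → ℕ → ℝ) (n : ℕ) (r : ℝ) : ℝ :=
  2 * ∑ k ∈ Finset.Icc 1 (n / 2), (k : ℝ) * a n (2 * k) * r ^ (2 * k - 1) - γ * wPoly a n r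

/-- `w̃_n(r) = 2 Σ_{k=1}^{⌊(n−1)/2⌋} k a_{n,2k+1} r^{2k} − γ v_n(r)`. -/
noncomputable def wTilde (γ : ℝ) (a : ℕ → ℕ → ℝ) (n : ℕ) (r : ℝ) : ℝ :=
  2 * ∑ k ∈ Finset.Icc 1 ((n - 1) / 2), (k : ℝ) * a n (2 * k + 1) * r ^ (2 * k) -
    γ * vPoly a n r

/-- `v̄_n(r) = 2 Σ_{k=1}^{⌊n/2⌋} k(2k−1) a_{n,2k} r^{2k−2}
  − γ Σ_{k=0}^{⌊(n−1)/2⌋} (2k+1) a_{n,2k+1} r^{2k} − γ w̃_n(r)`. -/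
noncomputable def vBar (γ : ℝ) (a : ℕ → ℕ → ℝ) (n : ℕ) (r : ℝ) : ℝ :=
  2 * ∑ k ∈ Finset.Icc 1 (n / 2), (k : ℝ) * (2 * k - 1 : ℝ) * a n (2 * k) * r ^ (2 * k - 2) -
    γ * ∑ k ∈ Finset.range ((n - 1) / 2 + 1), (2 * k + 1 : ℝ) * a n (2 * k + 1) * r ^ (2 * k) -
    γ * wTilde γ a n r

/-- `w̄_n(r) = 4 Σ_{k=1}^{⌊(n−1)/2⌋} k² a_{n,2k+1} r^{2k}
  − 2γ Σ_{k=1}^{⌊n/2⌋} k a_{n,2k} r^{2k} − γ r ṽ_n(r) − w̃_n(r)`. -/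
noncomputable def wBar (γ : ℝ) (a : ℕ → ℕ → ℝ) (n : ℕ) (r : ℝ) : ℝ :=
  4 * ∑ k ∈ Finset.Icc 1 ((n - 1) / 2), (k : ℝ) ^ 2 * a n (2 * k + 1) * r ^ (2 * k) -
    2 * γ * ∑ k ∈ Finset.Icc 1 (n / 2), (k : ℝ) * a n (2 * k) * r ^ (2 * k) -
    γ * r * vTilde γ a n r - wTilde γ a n r

/-!
With `K₀ = -(log(z/2) + C) I₀ + K₀ʳ` and `K₁ = 1/z + (log(z/2) + C) I₁ - K₁ʳ/2`, where the
regular parts `K₀ʳ`, `K₁ʳ` are entire,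
`Φ_n = (log(γr/2) + C)(I₁(γr) w_n - I₀(γr) v_n) + (K₀ʳ(γr) v_n - K₁ʳ(γr) w_n / 2) + w_n/(γr)`.
Since `I₀' = I₁` and `I₁' = I₀ - I₁/z`, the derivative of `I₁(γr) w_n - I₀(γr) v_n` is exactly
`-(I₀ ṽ_n - I₁ w̃_n)`, so the `log r` terms cancel and what remains is
`(1 + I₁ w_n - I₀ v_n)/r`, a constant times `I₀ ṽ_n - I₁ w̃_n`, the derivative of the
regular part, and `(w̃_n + γ v_n)/(γr)`. Each is `O(r)`: `I₀(0) = v_n(0) = 1` (as `a_{n,0} = 1`),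
and every other factor vanishes at `0` to the order needed.
-/

open Topology Asymptotics
open scoped Nat

def EntireCoeffs (d : ℕ → ℝ) : Prop := ∀ x : ℝ, 0 ≤ x → Summable fun k => |d k| * x ^ k

namespace EntireCoeffs

variable {d : ℕ → ℝ}

theorem of_abs_le_div_factorial {C : ℝ} (h : ∀ k, |d k| ≤ C / k !) : EntireCoeffs d := by
  intro x hx
  refine Summable.of_nonneg_of_le (fun k => by positivity) (fun k => ?_)
    ((Real.summable_pow_div_factorial x).mul_left C)
  calc |d k| * x ^ k ≤ C / k ! * x ^ k := mul_le_mul_of_nonneg_right (h k) (pow_nonneg hx k)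
    _ = C * (x ^ k / k !) := by ring

theorem summable (hd : EntireCoeffs d) : Summable fun k => |d k| := by
  simpa using hd 1 zero_le_one

theorem exponent_mul (hd : EntireCoeffs d) (j : ℕ) :
    EntireCoeffs fun k => (2 * k + j + 1 : ℝ) / 2 * d k := by
  intro x hx
  refine Summable.of_nonneg_of_le (fun k => by positivity) (fun k => ?_)
    ((hd (2 * x) (by positivity)).mul_left ((j : ℝ) + 1))
  have hk : (k + 1 : ℝ) ≤ 2 ^ k := by exact_mod_cast Nat.lt_two_pow_self
  have hexp : (2 * k + j + 1 : ℝ) / 2 ≤ (j + 1) * 2 ^ k := by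
    nlinarith [one_le_pow₀ (n := k) (one_le_two : (1 : ℝ) ≤ 2)]
  rw [abs_mul, abs_of_nonneg (by positivity), mul_pow]
  calc (2 * k + j + 1 : ℝ) / 2 * |d k| * x ^ k ≤ (j + 1) * 2 ^ k * |d k| * x ^ k := by
        gcongr
    _ = _ := by ring

end EntireCoeffs

noncomputable def lacunary (d : ℕ → ℝ) (j : ℕ) (z : ℝ) : ℝ := ∑' k, d k * (z / 2) ^ (2 * k + j)

section lacunary

variable {d : ℕ → ℝ}

theorem EntireCoeffs.summable_lacunary (hd : EntireCoeffs d) (j : ℕ) (z : ℝ) :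
    Summable fun k => d k * (z / 2) ^ (2 * k + j) := by
  refine Summable.of_norm_bounded ((hd _ (sq_nonneg (z / 2))).mul_right (|z / 2| ^ j)) fun k => ?_
  rw [Real.norm_eq_abs, abs_mul, abs_pow, pow_add, pow_mul, sq_abs, mul_assoc]

theorem lacunary_isBigO {j : ℕ} (hd : Summable fun k => |d k|) :
    lacunary d j =O[𝓝 0] fun z => z ^ j := by
  refine IsBigO.of_bound ((∑' k, |d k|) / 2 ^ j) ?_
  filter_upwards [Metric.closedBall_mem_nhds (0 : ℝ) two_pos] with z hz
  rw [Metric.mem_closedBall, dist_zero_right, Real.norm_eq_abs] at hz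
  have hz2 : |z / 2| ≤ 1 := by rw [abs_div, abs_two]; linarith
  have hterm : ∀ k, |d k * (z / 2) ^ (2 * k + j)| ≤ |d k| * |z / 2| ^ j := fun k => by
    rw [abs_mul, abs_pow, pow_add]
    exact mul_le_mul_of_nonneg_left
      (mul_le_of_le_one_left (by positivity) (pow_le_one₀ (abs_nonneg _) hz2)) (abs_nonneg _)
  have hs : Summable fun k => |d k| * |z / 2| ^ j := hd.mul_right _
  calc ‖lacunary d j z‖ ≤ ∑' k, |d k| * |z / 2| ^ j :=
        (norm_tsum_le_tsum_norm (hs.of_nonneg_of_le (fun _ => norm_nonneg _) hterm)).trans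
          (Summable.tsum_le_tsum hterm (hs.of_nonneg_of_le (fun _ => abs_nonneg _) hterm) hs)
    _ = (∑' k, |d k|) / 2 ^ j * ‖z ^ j‖ := by
        rw [tsum_mul_right, Real.norm_eq_abs, abs_pow, abs_div, abs_two, div_pow]; ring

theorem hasDerivAt_lacunary (hd : EntireCoeffs d) (j : ℕ) (z : ℝ) :
    HasDerivAt (lacunary d (j + 1))
      (lacunary (fun k => (2 * k + j + 1 : ℝ) / 2 * d k) j z) z := by
  set ρ := |z| + 1
  have hmem : ∀ {y : ℝ}, y ∈ Metric.ball (0 : ℝ) ρ ↔ |y| < ρ := by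
    simp [Metric.mem_ball]
  have hu := (hd.exponent_mul j).summable_lacunary j ρ
  refine hasDerivAt_tsum_of_isPreconnected (u := fun k : ℕ =>
      |(2 * k + j + 1 : ℝ) / 2 * d k| * |ρ / 2| ^ (2 * k + j)) (y₀ := 0) (y := z)
    (g := fun k y => d k * (y / 2) ^ (2 * k + (j + 1)))
    (g' := fun k y => (2 * k + j + 1 : ℝ) / 2 * d k * (y / 2) ^ (2 * k + j))
    (hu.abs.congr fun k => by rw [abs_mul, abs_pow]) Metric.isOpen_ball
    (convex_ball _ _).isPreconnected (fun k y _ => ?_) (fun k y hy => ?_)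
    (hmem.2 ?_) ?_ (hmem.2 (by simp [ρ]))
  · have h := (((hasDerivAt_id' y).div_const 2).fun_pow (2 * k + j + 1)).const_mul (d k)
    rw [show 2 * k + j + 1 - 1 = 2 * k + j by omega] at h
    exact h.congr_deriv (by push_cast; ring)
  · rw [Real.norm_eq_abs, abs_mul, abs_pow]
    refine mul_le_mul_of_nonneg_left (pow_le_pow_left₀ (abs_nonneg _) ?_ _) (abs_nonneg _)
    rw [abs_div, abs_div]
    exact div_le_div_of_nonneg_right (((hmem.1 hy).le).trans (le_abs_self ρ)) (abs_nonneg _)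
  · simp only [abs_zero, ρ]; positivity
  · simp

theorem differentiable_lacunary (hd : EntireCoeffs d) (j : ℕ) :
    Differentiable ℝ (lacunary d (j + 1)) :=
  fun z => (hasDerivAt_lacunary hd j z).differentiableAt

theorem deriv_lacunary_isBigO (hd : EntireCoeffs d) (j : ℕ) :
    deriv (lacunary d (j + 1)) =O[𝓝 0] fun z => z ^ j := by
  rw [show deriv (lacunary d (j + 1)) = _ from funext fun z => (hasDerivAt_lacunary hd j z).deriv]
  exact lacunary_isBigO (hd.exponent_mul j).summable

end lacunary

theorem psiHarm_le (n : ℕ) : psiHarm n ≤ n := by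
  calc psiHarm n ≤ ∑ _m ∈ Finset.Icc 1 n, (1 : ℝ) :=
        Finset.sum_le_sum fun m hm => by
          rw [one_div]; exact inv_le_one_of_one_le₀ (by exact_mod_cast (Finset.mem_Icc.1 hm).1)
    _ = n := by simp

theorem psiHarm_nonneg (n : ℕ) : 0 ≤ psiHarm n :=
  Finset.sum_nonneg fun _ _ => by positivity

theorem one_le_factorial_cast (k : ℕ) : (1 : ℝ) ≤ k ! := by exact_mod_cast k.factorial_pos

theorem factorial_succ_cast (k : ℕ) : ((k + 1)! : ℝ) = (k + 1) * k ! := by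
  push_cast [Nat.factorial_succ]; ring

theorem le_succ_mul_factorial_sq (k : ℕ) : (k + 1 : ℝ) * k ! ≤ ((k + 1) * k !) ^ 2 := by
  have h : (1 : ℝ) ≤ (k + 1) * k ! := by
    nlinarith [one_le_factorial_cast k, (Nat.cast_nonneg k : (0 : ℝ) ≤ k)]
  nlinarith

theorem entireCoeffs_besselI0 : EntireCoeffs fun k => 1 / (k ! : ℝ) ^ 2 := by
  refine EntireCoeffs.of_abs_le_div_factorial (C := 1) fun k => ?_
  have := one_le_factorial_cast k
  rw [abs_of_pos (by positivity)]
  gcongr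
  nlinarith

theorem entireCoeffs_besselI0_succ : EntireCoeffs fun k => 1 / ((k + 1)! : ℝ) ^ 2 := by
  refine EntireCoeffs.of_abs_le_div_factorial (C := 1) fun k => ?_
  rw [abs_of_pos (by positivity), factorial_succ_cast]
  have := le_succ_mul_factorial_sq k
  gcongr
  nlinarith [(Nat.cast_nonneg k : (0 : ℝ) ≤ k)]

theorem entireCoeffs_besselI1 : EntireCoeffs fun k => 1 / ((k ! : ℝ) * (k + 1)!) := by
  refine EntireCoeffs.of_abs_le_div_factorial (C := 1) fun k => ?_
  rw [abs_of_pos (by positivity)]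
  have := one_le_factorial_cast (k + 1)
  gcongr
  nlinarith [one_le_factorial_cast k]

theorem besselI0_eq_lacunary : besselI0 = lacunary (fun k => 1 / (k ! : ℝ) ^ 2) 0 :=
  funext fun z => tsum_congr fun k => by ring

theorem besselI1_eq_lacunary : besselI1 = lacunary (fun k => 1 / ((k ! : ℝ) * (k + 1)!)) 1 :=
  funext fun z => tsum_congr fun k => by ring

theorem besselI0_eq_one_add (z : ℝ) :
    besselI0 z = 1 + lacunary (fun k => 1 / ((k + 1)! : ℝ) ^ 2) 2 z := by
  rw [besselI0_eq_lacunary, lacunary,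
    (entireCoeffs_besselI0.summable_lacunary 0 z).tsum_eq_zero_add]
  simp only [lacunary, Nat.factorial_zero, Nat.cast_one, one_pow, div_one, mul_zero, zero_add,
    pow_zero, mul_one]
  congr 1

theorem hasDerivAt_besselI0 (z : ℝ) : HasDerivAt besselI0 (besselI1 z) z := by
  have h := (hasDerivAt_lacunary entireCoeffs_besselI0_succ 1 z).const_add 1
  rw [show (fun z => 1 + lacunary _ (1 + 1) z) = besselI0 from
    funext fun z => (besselI0_eq_one_add z).symm] at h
  refine h.congr_deriv ?_
  rw [besselI1_eq_lacunary]
  congr 1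
  funext k
  rw [factorial_succ_cast]
  field_simp
  push_cast
  ring

theorem hasDerivAt_besselI1 {z : ℝ} (hz : z ≠ 0) :
    HasDerivAt besselI1 (besselI0 z - besselI1 z / z) z := by
  have h := hasDerivAt_lacunary entireCoeffs_besselI1 0 z
  rw [← besselI1_eq_lacunary] at h
  refine h.congr_deriv ?_
  rw [besselI0_eq_lacunary, besselI1_eq_lacunary, lacunary, lacunary, lacunary,
    ← tsum_div_const, ← Summable.tsum_sub (entireCoeffs_besselI0.summable_lacunary 0 z)
      ((entireCoeffs_besselI1.summable_lacunary 1 z).div_const z)]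
  refine tsum_congr fun k => ?_
  rw [factorial_succ_cast]
  field_simp
  ring

theorem besselI0_isBigO : besselI0 =O[𝓝 0] fun z => z ^ 0 := by
  rw [besselI0_eq_lacunary]
  exact lacunary_isBigO entireCoeffs_besselI0.summable

theorem besselI0_sub_one_isBigO : (fun z => besselI0 z - 1) =O[𝓝 0] fun z => z ^ 2 := by
  simpa only [besselI0_eq_one_add, add_sub_cancel_left] using
    lacunary_isBigO entireCoeffs_besselI0_succ.summable

theorem besselI1_isBigO : besselI1 =O[𝓝 0] fun z => z ^ 1 := by
  rw [besselI1_eq_lacunary]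
  exact lacunary_isBigO entireCoeffs_besselI1.summable

noncomputable def besselK0Reg : ℝ → ℝ :=
  lacunary (fun k => psiHarm (k + 1) / ((k + 1)! : ℝ) ^ 2) 2

noncomputable def besselK1Reg : ℝ → ℝ :=
  lacunary (fun k => (psiHarm (k + 1) + psiHarm k) / ((k ! : ℝ) * (k + 1)!)) 1

theorem entireCoeffs_besselK0Reg :
    EntireCoeffs fun k => psiHarm (k + 1) / ((k + 1)! : ℝ) ^ 2 := by
  refine EntireCoeffs.of_abs_le_div_factorial (C := 1) fun k => ?_
  have hψ := psiHarm_le (k + 1)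
  have h1 := one_le_factorial_cast k
  rw [abs_of_nonneg (div_nonneg (psiHarm_nonneg _) (by positivity)), factorial_succ_cast,
    div_le_div_iff₀ (by positivity) (by positivity)]
  push_cast at hψ
  nlinarith [mul_le_mul_of_nonneg_right hψ (by positivity : (0 : ℝ) ≤ k !),
    le_succ_mul_factorial_sq k]

theorem entireCoeffs_besselK1Reg :
    EntireCoeffs fun k => (psiHarm (k + 1) + psiHarm k) / ((k ! : ℝ) * (k + 1)!) := by
  refine EntireCoeffs.of_abs_le_div_factorial (C := 2) fun k => ?_
  have hψ := add_le_add (psiHarm_le (k + 1)) (psiHarm_le k)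
  have h1 := one_le_factorial_cast k
  rw [abs_of_nonneg (div_nonneg (add_nonneg (psiHarm_nonneg _) (psiHarm_nonneg _))
    (by positivity)), factorial_succ_cast, div_le_div_iff₀ (by positivity) (by positivity)]
  push_cast at hψ
  nlinarith [mul_le_mul_of_nonneg_right hψ (by positivity : (0 : ℝ) ≤ k !),
    mul_le_mul_of_nonneg_right h1 (by positivity : (0 : ℝ) ≤ (k + 1) * k !)]

theorem besselK0_eq (z : ℝ) :
    besselK0 z = -(Real.log (z / 2) + eulerMascheroniConstant) * besselI0 z + besselK0Reg z := by
  unfold besselK0 besselK0Reg lacunary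
  congr 1

theorem besselK1_eq (z : ℝ) :
    besselK1 z = 1 / z + (Real.log (z / 2) + eulerMascheroniConstant) * besselI1 z -
      besselK1Reg z / 2 := by
  rw [besselK1, besselK1Reg, lacunary]
  ring

theorem differentiable_besselK0Reg : Differentiable ℝ besselK0Reg :=
  differentiable_lacunary entireCoeffs_besselK0Reg 1

theorem differentiable_besselK1Reg : Differentiable ℝ besselK1Reg :=
  differentiable_lacunary entireCoeffs_besselK1Reg 0

theorem besselK0Reg_isBigO : besselK0Reg =O[𝓝 0] fun z => z ^ 2 :=
  lacunary_isBigO entireCoeffs_besselK0Reg.summable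

theorem besselK1Reg_isBigO : besselK1Reg =O[𝓝 0] fun z => z ^ 1 :=
  lacunary_isBigO entireCoeffs_besselK1Reg.summable

theorem deriv_besselK0Reg_isBigO : deriv besselK0Reg =O[𝓝 0] fun z => z ^ 1 :=
  deriv_lacunary_isBigO entireCoeffs_besselK0Reg 1

theorem deriv_besselK1Reg_isBigO : deriv besselK1Reg =O[𝓝 0] fun z => z ^ 0 :=
  deriv_lacunary_isBigO entireCoeffs_besselK1Reg 0

theorem Finset.sum_Icc_one_eq_sum_range_succ {M : Type*} [AddCommMonoid M] {f : ℕ → M}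
    (h : f 0 = 0) (m : ℕ) : ∑ k ∈ Finset.Icc 1 m, f k = ∑ k ∈ Finset.range (m + 1), f k := by
  rw [Nat.range_succ_eq_Icc_zero, ← Finset.insert_Icc_add_one_left_eq_Icc (Nat.zero_le m),
    Finset.sum_insert (by simp), h, zero_add, zero_add]

theorem isBigO_pow_pow_of_le {i j : ℕ} (h : j ≤ i) :
    (fun r : ℝ => r ^ i) =O[𝓝 0] fun r => r ^ j := by
  rcases h.lt_or_eq with hlt | rfl
  · exact (isLittleO_pow_pow hlt).isBigO
  · exact isBigO_refl _ _

theorem Asymptotics.IsBigO.comp_const_mul {f : ℝ → ℝ} {j : ℕ}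
    (hf : f =O[𝓝 0] fun z => z ^ j) (γ : ℝ) :
    (fun r => f (γ * r)) =O[𝓝 0] fun r => r ^ j := by
  have hγ : Tendsto (fun r : ℝ => γ * r) (𝓝 0) (𝓝 0) := by
    simpa using (continuous_const_mul γ).tendsto 0
  refine (hf.comp_tendsto hγ).trans ?_
  simp_rw [Function.comp_def, mul_pow]
  exact (isBigO_refl _ _).const_mul_left _

theorem Asymptotics.IsBigO.mul_pow {l : Filter ℝ} {f g : ℝ → ℝ} {i j : ℕ}
    (hf : f =O[l] fun r => r ^ i) (hg : g =O[l] fun r => r ^ j) :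
    (fun r => f r * g r) =O[l] fun r => r ^ (i + j) := by
  simpa only [pow_add] using hf.mul hg

theorem Asymptotics.IsBigO.div_self_nhdsGT {f : ℝ → ℝ} {j : ℕ}
    (hf : f =O[𝓝 0] fun r => r ^ (j + 1)) :
    (fun r => f r / r) =O[𝓝[>] 0] fun r => r ^ j := by
  refine ((hf.mono nhdsWithin_le_nhds).mul (isBigO_refl (fun r : ℝ => r⁻¹) _)).congr'
    (Eventually.of_forall fun r => (div_eq_mul_inv _ _).symm) ?_
  filter_upwards [self_mem_nhdsWithin] with r (hr : 0 < r)
  rw [pow_succ, mul_inv_cancel_right₀ hr.ne']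

theorem isBigO_sum_mul_pow {s : Finset ℕ} (b : ℕ → ℝ) {e : ℕ → ℕ} {E : ℕ}
    (he : ∀ k ∈ s, E ≤ e k) :
    (fun r : ℝ => ∑ k ∈ s, b k * r ^ e k) =O[𝓝 0] fun r => r ^ E :=
  IsBigO.fun_sum fun k hk => (isBigO_pow_pow_of_le (he k hk)).const_mul_left _

section polynomials

variable (a : ℕ → ℕ → ℝ) (n : ℕ)

-- `vTilde 0 a n` is `v_n'`, and `wTilde 0 a n r = w_n'(r) - w_n(r) / r`.
theorem hasDerivAt_vPoly (r : ℝ) : HasDerivAt (vPoly a n) (vTilde 0 a n r) r := by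
  have h := HasDerivAt.fun_sum (u := Finset.range (n / 2 + 1)) (x := r)
    fun k _ => (hasDerivAt_pow (2 * k) r).const_mul (a n (2 * k))
  refine h.congr_deriv ?_
  rw [vTilde, zero_mul, sub_zero, Finset.mul_sum,
    Finset.sum_Icc_one_eq_sum_range_succ (by simp)]
  refine Finset.sum_congr rfl fun k _ => ?_
  push_cast; ring

theorem hasDerivAt_wPoly {r : ℝ} (hr : r ≠ 0) :
    HasDerivAt (wPoly a n) (wTilde 0 a n r + wPoly a n r / r) r := by
  have h := HasDerivAt.fun_sum (u := Finset.range ((n - 1) / 2 + 1)) (x := r)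
    fun k _ => (hasDerivAt_pow (2 * k + 1) r).const_mul (a n (2 * k + 1))
  refine h.congr_deriv ?_
  rw [wTilde, wPoly, zero_mul, sub_zero, Finset.mul_sum, Finset.sum_div,
    Finset.sum_Icc_one_eq_sum_range_succ (by simp), ← Finset.sum_add_distrib]
  refine Finset.sum_congr rfl fun k _ => ?_
  push_cast
  field_simp
  ring

theorem vPoly_sub_one_isBigO (ha : a n 0 = 1) :
    (fun r => vPoly a n r - 1) =O[𝓝 0] fun r => r ^ 2 := by
  simp_rw [vPoly, Finset.sum_range_succ', mul_zero, pow_zero, ha, mul_one, add_sub_cancel_right]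
  exact isBigO_sum_mul_pow _ fun k _ => by omega

theorem vPoly_isBigO : vPoly a n =O[𝓝 0] fun r => r ^ 0 :=
  isBigO_sum_mul_pow _ fun _ _ => Nat.zero_le _

theorem wPoly_isBigO : wPoly a n =O[𝓝 0] fun r => r ^ 1 :=
  isBigO_sum_mul_pow _ fun _ _ => by omega

theorem vTilde_eq_sub (γ r : ℝ) : vTilde γ a n r = vTilde 0 a n r - γ * wPoly a n r := by
  simp [vTilde]

theorem wTilde_eq_sub (γ r : ℝ) : wTilde γ a n r = wTilde 0 a n r - γ * vPoly a n r := by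
  simp [wTilde]

theorem vTilde_zero_isBigO : vTilde 0 a n =O[𝓝 0] fun r => r ^ 1 := by
  unfold vTilde
  simp only [zero_mul, sub_zero]
  refine (isBigO_sum_mul_pow _ fun k hk => ?_).const_mul_left 2
  have := (Finset.mem_Icc.1 hk).1
  omega

theorem wTilde_zero_isBigO : wTilde 0 a n =O[𝓝 0] fun r => r ^ 2 := by
  unfold wTilde
  simp only [zero_mul, sub_zero]
  refine (isBigO_sum_mul_pow _ fun k hk => ?_).const_mul_left 2
  have := (Finset.mem_Icc.1 hk).1
  omega

end polynomials

section Phi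

variable (γ : ℝ) (a : ℕ → ℕ → ℝ) (n : ℕ)

noncomputable def logCoeff (r : ℝ) : ℝ :=
  besselI1 (γ * r) * wPoly a n r - besselI0 (γ * r) * vPoly a n r

noncomputable def regularPart (r : ℝ) : ℝ :=
  besselK0Reg (γ * r) * vPoly a n r - besselK1Reg (γ * r) * wPoly a n r / 2

theorem PhiFund_eq {r : ℝ} (hγ : γ ≠ 0) (hr : r ≠ 0) :
    PhiFund γ a n r = (Real.log (γ * r / 2) + eulerMascheroniConstant) * logCoeff γ a n r +
      regularPart γ a n r + wPoly a n r / (γ * r) := by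
  rw [PhiFund, besselK0_eq, besselK1_eq, logCoeff, regularPart]
  field_simp
  ring

theorem hasDerivAt_logCoeff {r : ℝ} (hγ : γ ≠ 0) (hr : r ≠ 0) :
    HasDerivAt (logCoeff γ a n)
      (-(besselI0 (γ * r) * vTilde γ a n r - besselI1 (γ * r) * wTilde γ a n r)) r := by
  have hlin := (hasDerivAt_id' r).const_mul γ
  have hI0 := (hasDerivAt_besselI0 (γ * r)).comp r hlin
  have hI1 := (hasDerivAt_besselI1 (mul_ne_zero hγ hr)).comp r hlin
  refine ((hI1.mul (hasDerivAt_wPoly a n hr)).sub (hI0.mul (hasDerivAt_vPoly a n r))).congr_deriv ?_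
  simp only [Function.comp_apply]
  rw [vTilde_eq_sub a n γ, wTilde_eq_sub a n γ]
  field_simp
  ring

theorem hasDerivAt_regularPart {r : ℝ} (hr : r ≠ 0) :
    HasDerivAt (regularPart γ a n)
      (γ * (deriv besselK0Reg (γ * r) * vPoly a n r) + besselK0Reg (γ * r) * vTilde 0 a n r -
        2⁻¹ * (γ * (deriv besselK1Reg (γ * r) * wPoly a n r) +
          besselK1Reg (γ * r) * (wTilde 0 a n r + wPoly a n r / r))) r := by
  have hlin := (hasDerivAt_id' r).const_mul γ
  have hK0 := (differentiable_besselK0Reg (γ * r)).hasDerivAt.comp r hlin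
  have hK1 := (differentiable_besselK1Reg (γ * r)).hasDerivAt.comp r hlin
  refine ((hK0.mul (hasDerivAt_vPoly a n r)).sub
    ((hK1.mul (hasDerivAt_wPoly a n hr)).div_const 2)).congr_deriv ?_
  simp only [Function.comp_apply]
  ring

theorem deriv_regularPart_isBigO :
    deriv (regularPart γ a n) =O[𝓝[>] 0] fun r => r ^ 1 := by
  have hK0' := ((deriv_besselK0Reg_isBigO.comp_const_mul γ).mul_pow
    (vPoly_isBigO a n)).const_mul_left γ
  have hK0 := ((besselK0Reg_isBigO.comp_const_mul γ).mul_pow (vTilde_zero_isBigO a n)).trans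
    (isBigO_pow_pow_of_le (by norm_num : 1 ≤ 2 + 1))
  have hK1' := ((deriv_besselK1Reg_isBigO.comp_const_mul γ).mul_pow
    (wPoly_isBigO a n)).const_mul_left γ
  have hK1 := ((besselK1Reg_isBigO.comp_const_mul γ).mono nhdsWithin_le_nhds).mul_pow
    ((((wTilde_zero_isBigO a n).trans (isBigO_pow_pow_of_le (Nat.zero_le 2))).mono
      nhdsWithin_le_nhds).add (wPoly_isBigO a n).div_self_nhdsGT)
  refine ((hK0'.add hK0).mono nhdsWithin_le_nhds |>.sub
    (((hK1'.mono nhdsWithin_le_nhds).add hK1).const_mul_left 2⁻¹)).congr' ?_ EventuallyEq.rfl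
  filter_upwards [self_mem_nhdsWithin] with r (hr : 0 < r)
  exact (hasDerivAt_regularPart γ a n hr.ne').deriv.symm

theorem deriv_PhiFund_add {r : ℝ} (hγ : γ ≠ 0) (hr : 0 < r) :
    deriv (PhiFund γ a n) r + 1 / r - Real.log (1 / r) *
        (besselI0 (γ * r) * vTilde γ a n r - besselI1 (γ * r) * wTilde γ a n r) =
      (1 + logCoeff γ a n r) / r -
        (Real.log (γ / 2) + eulerMascheroniConstant) *
          (besselI0 (γ * r) * vTilde γ a n r - besselI1 (γ * r) * wTilde γ a n r) +
        deriv (regularPart γ a n) r + wTilde 0 a n r / (γ * r) := by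
  have hr0 := hr.ne'
  have hlog : HasDerivAt (fun r => Real.log (γ * r / 2) + eulerMascheroniConstant) (1 / r) r :=
    ((((hasDerivAt_id' r).const_mul γ).div_const 2).log (by positivity)).add_const _
      |>.congr_deriv (by field_simp)
  have hpole : HasDerivAt (fun r => wPoly a n r / (γ * r)) (wTilde 0 a n r / (γ * r)) r :=
    ((hasDerivAt_wPoly a n hr0).div ((hasDerivAt_id' r).const_mul γ) (mul_ne_zero hγ hr0))
      |>.congr_deriv (by field_simp; ring)
  have hPhi : PhiFund γ a n =ᶠ[𝓝 r] fun r =>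
      (Real.log (γ * r / 2) + eulerMascheroniConstant) * logCoeff γ a n r +
        regularPart γ a n r + wPoly a n r / (γ * r) := by
    filter_upwards [lt_mem_nhds hr] with s hs using PhiFund_eq γ a n hγ hs.ne'
  have hG : HasDerivAt (fun r => (Real.log (γ * r / 2) + eulerMascheroniConstant) *
      logCoeff γ a n r + regularPart γ a n r + wPoly a n r / (γ * r)) _ r :=
    ((hlog.mul (hasDerivAt_logCoeff γ a n hγ hr0)).add
      (hasDerivAt_regularPart γ a n hr0).differentiableAt.hasDerivAt).add hpole
  rw [hPhi.deriv_eq, hG.deriv, show γ * r / 2 = γ / 2 * r by ring,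
    Real.log_mul (div_ne_zero hγ two_ne_zero) hr0, one_div r, Real.log_inv]
  field_simp
  ring

theorem one_add_logCoeff_isBigO (ha : a n 0 = 1) :
    (fun r => 1 + logCoeff γ a n r) =O[𝓝 0] fun r => r ^ 2 := by
  have hI1w := (besselI1_isBigO.comp_const_mul γ).mul_pow (wPoly_isBigO a n)
  have hI0v := (besselI0_sub_one_isBigO.comp_const_mul γ).mul_pow (vPoly_isBigO a n)
  refine ((hI1w.sub hI0v).sub (vPoly_sub_one_isBigO a n ha)).congr_left fun r => ?_
  rw [logCoeff]
  ring

theorem besselI0_mul_vTilde_sub_isBigO :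
    (fun r => besselI0 (γ * r) * vTilde γ a n r - besselI1 (γ * r) * wTilde γ a n r)
      =O[𝓝 0] fun r => r ^ 1 := by
  have hv : vTilde γ a n =O[𝓝 0] fun r => r ^ 1 :=
    ((vTilde_zero_isBigO a n).sub ((wPoly_isBigO a n).const_mul_left γ)).congr_left
      fun r => (vTilde_eq_sub a n γ r).symm
  have hw : wTilde γ a n =O[𝓝 0] fun r => r ^ 0 :=
    (((wTilde_zero_isBigO a n).trans (isBigO_pow_pow_of_le (Nat.zero_le 2))).sub
      ((vPoly_isBigO a n).const_mul_left γ)).congr_left fun r => (wTilde_eq_sub a n γ r).symm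
  exact ((besselI0_isBigO.comp_const_mul γ).mul_pow hv).sub
    ((besselI1_isBigO.comp_const_mul γ).mul_pow hw)

theorem wTilde_zero_div_isBigO :
    (fun r => wTilde 0 a n r / (γ * r)) =O[𝓝[>] 0] fun r => r ^ 1 :=
  ((wTilde_zero_isBigO a n).div_self_nhdsGT.const_mul_left γ⁻¹).congr_left fun r => by
    rw [mul_comm γ, ← div_div, div_eq_inv_mul _ γ]

end Phi

theorem exists_bound_of_isBigO_nhdsGT {f : ℝ → ℝ} (hf : f =O[𝓝[>] 0] fun r => r ^ 1) :
    ∃ δ : ℝ, 0 < δ ∧ ∃ c₀ : ℝ, 0 ≤ c₀ ∧ ∀ r : ℝ, 0 < r → r < δ → |f r| ≤ c₀ * r := by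
  obtain ⟨c₀, hc₀, hbound⟩ := hf.exists_pos
  obtain ⟨δ, hδ, hsub⟩ := (nhdsGT_basis (0 : ℝ)).eventually_iff.1 hbound.bound
  refine ⟨δ, hδ, c₀, hc₀.le, fun r hr hrδ => ?_⟩
  simpa [abs_of_pos hr] using hsub ⟨hr, hrδ⟩

theorem stmt_16_general
    (κ c : ℝ) (hκ : 0 < κ) (hc : 0 < c) (a : ℕ → ℕ → ℝ)
    (ha0 : ∀ n : ℕ, a n 0 = 1)
    (n : ℕ) :
    ∃ δ : ℝ, 0 < δ ∧ ∃ c₀ : ℝ, 0 ≤ c₀ ∧ ∀ r : ℝ, 0 < r → r < δ →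
      |deriv (PhiFund (gammaC κ c) a n) r + 1 / r -
          Real.log (1 / r) *
            (besselI0 (gammaC κ c * r) * vTilde (gammaC κ c) a n r -
              besselI1 (gammaC κ c * r) * wTilde (gammaC κ c) a n r)| ≤ c₀ * r := by
  set γ := gammaC κ c
  have hγ : γ ≠ 0 := div_ne_zero hκ.ne' hc.ne'
  have hbound := (((one_add_logCoeff_isBigO γ a n (ha0 n)).div_self_nhdsGT.sub
      (((besselI0_mul_vTilde_sub_isBigO γ a n).mono nhdsWithin_le_nhds).const_mul_left
        (Real.log (γ / 2) + eulerMascheroniConstant))).add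
    (deriv_regularPart_isBigO γ a n)).add (wTilde_zero_div_isBigO γ a n)
  refine exists_bound_of_isBigO_nhdsGT (hbound.congr' ?_ EventuallyEq.rfl)
  filter_upwards [self_mem_nhdsWithin] with r (hr : 0 < r)
  exact (deriv_PhiFund_add γ a n hγ hr).symm

/-- As `r → 0⁺`,
`Φ_n′(r) + 1/r − ln(1/r)[I₀(γr) ṽ_n(r) − I₁(γr) w̃_n(r)] = O(r)`:
there are `δ > 0` and `c₀ ≥ 0` bounding the left-hand side by `c₀ r` for `0 < r < δ`. -/
theorem stmt_16
    (κ c : ℝ) (hκ : 0 < κ) (hc : 0 < c) (a : ℕ → ℕ → ℝ)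
    (ha0 : ∀ n : ℕ, a n 0 = 1)
    (hann : ∀ n : ℕ, 1 ≤ n →
      a n n = -(betaC κ c 1 * a (n - 1) (n - 1)) / (2 * gammaC κ c * n))
    (hrec : ∀ n k : ℕ, 1 ≤ k → k ≤ n - 1 →
      a n k = (1 / (2 * gammaC κ c * k)) *
        (4 * (((k + 1) / 2 : ℕ) : ℝ) ^ 2 * a n (k + 1) -
          ∑ m ∈ Finset.Icc (k - 1) (n - 1), betaC κ c (n - m) * a m (k - 1)))
    (hzero : ∀ n k : ℕ, n < k → a n k = 0)
    (n : ℕ) :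
    ∃ δ : ℝ, 0 < δ ∧ ∃ c₀ : ℝ, 0 ≤ c₀ ∧ ∀ r : ℝ, 0 < r → r < δ →
      |deriv (PhiFund (gammaC κ c) a n) r + 1 / r -
          Real.log (1 / r) *
            (besselI0 (gammaC κ c * r) * vTilde (gammaC κ c) a n r -
              besselI1 (gammaC κ c * r) * wTilde (gammaC κ c) a n r)| ≤ c₀ * r :=
  stmt_16_general κ c hκ hc a ha0 n
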